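/- arXiv:1208.4666 — 11 statements merged into one kernel-verified Lean document; each statement's English description precedes it below -/
import Mathlib

section
/- Suppose B, B_S, B_N, G, G_S, G_N, G_R : ℝ → ℝ are differentiable and satisfy B' + mBG + 4(B_N G_N + B_S G_S) = 0, B_S' + mB_S G + B G_S - 2B_N G_R = 0, and B_N' + mB_N G + B G_N + 2B_S G_R = 0. Then Δ := (1/4)B² - B_S² - B_N² satisfies Δ' + 2mGΔ = 0. -/
/-- the discriminant Δ = (1/4)B² - B_S² - B_N² satisfies
Δ' + 2mGΔ = 0. -/
theorem stmt2 (m : ℝ) (B B_S B_N G G_S G_N G_R : ℝ → ℝ)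
    (hB : ∀ t, HasDerivAt B (-(m * B t * G t + 4 * (B_N t * G_N t + B_S t * G_S t))) t)
    (hBS : ∀ t, HasDerivAt B_S (-(m * B_S t * G t + B t * G_S t - 2 * B_N t * G_R t)) t)
    (hBN : ∀ t, HasDerivAt B_N (-(m * B_N t * G t + B t * G_N t + 2 * B_S t * G_R t)) t) :
    ∀ t, HasDerivAt (fun s => (1 / 4) * (B s) ^ 2 - (B_S s) ^ 2 - (B_N s) ^ 2)
      (-(2 * m * G t * ((1 / 4) * (B t) ^ 2 - (B_S t) ^ 2 - (B_N t) ^ 2))) t := by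
  intro t
  have hΔ := ((((hB t).pow 2).const_mul (1 / 4 : ℝ)).sub ((hBS t).pow 2)).sub ((hBN t).pow 2)
  refine hΔ.congr_deriv ?_
  -- The coupling terms in `G_S`, `G_N` and `G_R` cancel in pairs; only the `m * G` terms survive.
  ring
end

section
/- Under the hypotheses of the dynamical system (b43) (equations for B, B_S, B_N, G, G_S, G_N, G_R with parameters m, f, ε₂), the quantity M = 2(B_N G_S - B_S G_N) - B(G_R + f/2) satisfies M' + (m+1)·G·M = 0. -/
theorem stmt3_general (m f : ℝ) (B B_S B_N G G_S G_N G_R ε₂ : ℝ → ℝ)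
    (hB : ∀ t, HasDerivAt B (-(m * B t * G t + 4 * (B_N t * G_N t + B_S t * G_S t))) t)
    (hBS : ∀ t, HasDerivAt B_S (-(m * B_S t * G t + B t * G_S t - 2 * B_N t * G_R t)) t)
    (hBN : ∀ t, HasDerivAt B_N (-(m * B_N t * G t + B t * G_N t + 2 * B_S t * G_R t)) t)
    (hGN : ∀ t, HasDerivAt G_N (-(G t * G_N t - f * G_S t
      + 2 * (ε₂ t * m / (m - 1)) * B_N t)) t)
    (hGS : ∀ t, HasDerivAt G_S (-(G t * G_S t + f * G_N t
      + 2 * (ε₂ t * m / (m - 1)) * B_S t)) t)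
    (hGR : ∀ t, HasDerivAt G_R (-(G t * G_R t + (f / 2) * G t)) t) :
    ∀ t, HasDerivAt
      (fun s => 2 * (B_N s * G_S s - B_S s * G_N s) - B s * (G_R s + f / 2))
      (-((m + 1) * G t *
        (2 * (B_N t * G_S t - B_S t * G_N t) - B t * (G_R t + f / 2)))) t := by
  intro t
  have hM := (((hBN t).mul (hGS t)).sub ((hBS t).mul (hGN t))).const_mul 2
    |>.sub ((hB t).mul ((hGR t).add_const (f / 2)))
  -- The `ε₂` terms cancel in `B_N G_S - B_S G_N`, as do the `f` and `G_R` couplings.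
  exact hM.congr_deriv (by ring)

/-- under the full dynamical system (b43),
M = 2(B_N G_S - B_S G_N) - B(G_R + f/2) satisfies M' + (m+1)·G·M = 0. -/
theorem stmt3 (m f : ℝ) (hm : m ≠ 1) (B B_S B_N G G_S G_N G_R ε₂ : ℝ → ℝ)
    (hε₂ : Differentiable ℝ ε₂)
    (hB : ∀ t, HasDerivAt B (-(m * B t * G t + 4 * (B_N t * G_N t + B_S t * G_S t))) t)
    (hBS : ∀ t, HasDerivAt B_S (-(m * B_S t * G t + B t * G_S t - 2 * B_N t * G_R t)) t)
    (hBN : ∀ t, HasDerivAt B_N (-(m * B_N t * G t + B t * G_N t + 2 * B_S t * G_R t)) t)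
    (hG : ∀ t, HasDerivAt G (-((G t) ^ 2 / 2 + 2 * ((G_N t) ^ 2 + (G_S t) ^ 2 - (G_R t) ^ 2)
      - 2 * f * G_R t + 2 * (ε₂ t * m / (m - 1)) * B t)) t)
    (hGN : ∀ t, HasDerivAt G_N (-(G t * G_N t - f * G_S t
      + 2 * (ε₂ t * m / (m - 1)) * B_N t)) t)
    (hGS : ∀ t, HasDerivAt G_S (-(G t * G_S t + f * G_N t
      + 2 * (ε₂ t * m / (m - 1)) * B_S t)) t)
    (hGR : ∀ t, HasDerivAt G_R (-(G t * G_R t + (f / 2) * G t)) t) :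
    ∀ t, HasDerivAt
      (fun s => 2 * (B_N s * G_S s - B_S s * G_N s) - B s * (G_R s + f / 2))
      (-((m + 1) * G t *
        (2 * (B_N t * G_S t - B_S t * G_N t) - B t * (G_R t + f / 2)))) t :=
  stmt3_general m f B B_S B_N G G_S G_N G_R ε₂ hB hBS hBN hGN hGS hGR
end

section
/- Let Ω : ℝ → ℝ be positive differentiable with G = 2Ω'/Ω, and define modulated variables B̄ = Ω^{2m}B, B̄_S = Ω^{2m}B_S, B̄_N = Ω^{2m}B_N, Ḡ_S = Ω²G_S, Ḡ_N = Ω²G_N. If B, B_S, B_N, G_S, G_N satisfy the equations B' + mBG + 4(B_N G_N + B_S G_S) = 0, B_S' + mB_S G + BG_S - 2B_N G_R = 0, B_N' + mB_N G + BG_N + 2B_S G_R = 0, G_N' + G G_N - f G_S + 2(ε₂ m/(m-1))B_N = 0, G_S' + G G_S + f G_N + 2(ε₂ m/(m-1))B_S = 0, with G_R = c₀/Ω² - f/2, then the modulated variables satisfy: B̄' + 4(B̄_N Ḡ_N + B̄_S Ḡ_S)/Ω² = 0; B̄_S' + f B̄_N + (B̄ Ḡ_S - 2c₀ B̄_N)/Ω²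 = 0; B̄_N' - f B̄_S + (B̄ Ḡ_N + 2c₀ B̄_S)/Ω² = 0; Ḡ_S' + f Ḡ_N + (2ε₂ m/(m-1))·B̄_S/Ω^{2(m-1)} = 0; Ḡ_N' - f Ḡ_S + (2ε₂ m/(m-1))·B̄_N/Ω^{2(m-1)} = 0. -/
/-!
With `G = 2Ω'/Ω` one has `(Ω ^ p * X)' = Ω ^ p * (X' + (p / 2) G X)`, so multiplying by `Ω ^ (2m)`
(resp. `Ω ^ 2`) removes exactly the `m G`-terms (resp. `G`-terms) of the system. What remains
becomes the modulated system after writing `Ω ^ (2m) = Ω ^ (2(m-1)) * Ω ^ 2` and splitting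
`G_R = c₀ / Ω ^ 2 - f / 2`.
-/

open Real

theorem HasDerivAt.rpow_mul {Ω X : ℝ → ℝ} {Ω' X' t : ℝ} (hΩ : HasDerivAt Ω Ω' t) (hpos : 0 < Ω t)
    (hX : HasDerivAt X X' t) (p : ℝ) :
    HasDerivAt (fun s => Ω s ^ p * X s) (Ω t ^ p * (X' + p * (Ω' / Ω t) * X t)) t := by
  refine ((hΩ.rpow_const (p := p) (Or.inl hpos.ne')).mul hX).congr_deriv ?_
  rw [rpow_sub hpos, rpow_one]
  field_simp
  ring

theorem HasDerivAt.sq_mul {Ω X : ℝ → ℝ} {Ω' X' t : ℝ} (hΩ : HasDerivAt Ω Ω' t) (hpos : 0 < Ω t)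
    (hX : HasDerivAt X X' t) :
    HasDerivAt (fun s => Ω s ^ 2 * X s) (Ω t ^ 2 * (X' + 2 * (Ω' / Ω t) * X t)) t := by
  simpa only [rpow_two] using hΩ.rpow_mul hpos hX 2

theorem Real.rpow_two_mul_eq_rpow_two_mul_sub_one_mul_sq {x : ℝ} (hx : 0 < x) (m : ℝ) :
    x ^ (2 * m) = x ^ (2 * (m - 1)) * x ^ 2 := by
  rw [← rpow_two, ← rpow_add hx]
  ring_nf

/-- reduction of the system (b43) to the modulated system (5.3.10). -/
theorem stmt4 (m f c₀ : ℝ) (hm : m ≠ 1) (B B_S B_N G_S G_N G_R ε₂ Ω : ℝ → ℝ)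
    (hΩpos : ∀ t, 0 < Ω t) (hΩdiff : Differentiable ℝ Ω)
    (G : ℝ → ℝ) (hG : ∀ t, G t = 2 * deriv Ω t / Ω t)
    (hGR : ∀ t, G_R t = c₀ / (Ω t) ^ 2 - f / 2)
    (hB : ∀ t, HasDerivAt B (-(m * B t * G t + 4 * (B_N t * G_N t + B_S t * G_S t))) t)
    (hBS : ∀ t, HasDerivAt B_S (-(m * B_S t * G t + B t * G_S t - 2 * B_N t * G_R t)) t)
    (hBN : ∀ t, HasDerivAt B_N (-(m * B_N t * G t + B t * G_N t + 2 * B_S t * G_R t)) t)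
    (hGN : ∀ t, HasDerivAt G_N (-(G t * G_N t - f * G_S t
      + 2 * (ε₂ t * m / (m - 1)) * B_N t)) t)
    (hGS : ∀ t, HasDerivAt G_S (-(G t * G_S t + f * G_N t
      + 2 * (ε₂ t * m / (m - 1)) * B_S t)) t)
    (Bb BbS BbN GbS GbN : ℝ → ℝ)
    (hBb : ∀ t, Bb t = (Ω t) ^ (2 * m) * B t)
    (hBbS : ∀ t, BbS t = (Ω t) ^ (2 * m) * B_S t)
    (hBbN : ∀ t, BbN t = (Ω t) ^ (2 * m) * B_N t)
    (hGbS : ∀ t, GbS t = (Ω t) ^ 2 * G_S t)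
    (hGbN : ∀ t, GbN t = (Ω t) ^ 2 * G_N t) :
    (∀ t, HasDerivAt Bb (-(4 * (BbN t * GbN t + BbS t * GbS t) / (Ω t) ^ 2)) t) ∧
    (∀ t, HasDerivAt BbS (-(f * BbN t + (Bb t * GbS t - 2 * c₀ * BbN t) / (Ω t) ^ 2)) t) ∧
    (∀ t, HasDerivAt BbN (-(-(f * BbS t) + (Bb t * GbN t + 2 * c₀ * BbS t) / (Ω t) ^ 2)) t) ∧
    (∀ t, HasDerivAt GbS (-(f * GbN t
      + (2 * ε₂ t * m / (m - 1)) * BbS t / (Ω t) ^ (2 * (m - 1)))) t) ∧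
    (∀ t, HasDerivAt GbN (-(-(f * GbS t)
      + (2 * ε₂ t * m / (m - 1)) * BbN t / (Ω t) ^ (2 * (m - 1)))) t) := by
  obtain rfl : Bb = _ := funext hBb
  obtain rfl : BbS = _ := funext hBbS
  obtain rfl : BbN = _ := funext hBbN
  obtain rfl : GbS = _ := funext hGbS
  obtain rfl : GbN = _ := funext hGbN
  have hΩ t : HasDerivAt Ω (deriv Ω t) t := (hΩdiff t).hasDerivAt
  have hm' : m - 1 ≠ 0 := sub_ne_zero.mpr hm
  have hsplit t := rpow_two_mul_eq_rpow_two_mul_sub_one_mul_sq (hΩpos t) m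
  refine ⟨fun t => ((hΩ t).rpow_mul (hΩpos t) (hB t) _).congr_deriv ?_,
    fun t => ((hΩ t).rpow_mul (hΩpos t) (hBS t) _).congr_deriv ?_,
    fun t => ((hΩ t).rpow_mul (hΩpos t) (hBN t) _).congr_deriv ?_,
    fun t => ((hΩ t).sq_mul (hΩpos t) (hGS t)).congr_deriv ?_,
    fun t => ((hΩ t).sq_mul (hΩpos t) (hGN t)).congr_deriv ?_⟩ <;>
  · have hΩne : Ω t ≠ 0 := (hΩpos t).ne'
    have hw : Ω t ^ (2 * (m - 1)) ≠ 0 := (rpow_pos_of_pos (hΩpos t) _).ne'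
    simp only [hG, hGR, hsplit]
    field_simp
    ring
end

section
/- Suppose B̄, B̄_S, B̄_N, Ḡ_S, Ḡ_N : ℝ → ℝ satisfy the modulated system: B̄' + 4(B̄_N Ḡ_N + B̄_S Ḡ_S)/Ω² = 0; B̄_S' + f B̄_N + (B̄ Ḡ_S - 2c₀ B̄_N)/Ω² = 0; B̄_N' - f B̄_S + (B̄ Ḡ_N + 2c₀ B̄_S)/Ω² = 0, where Ω : ℝ → ℝ is positive. Then B̄_S² + B̄_N² - (1/4)B̄² is constant. -/
theorem HasDerivAt.sq_add_sq_sub_quarter_sq {S N B : ℝ → ℝ} {S' N' B' t : ℝ}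
    (hS : HasDerivAt S S' t) (hN : HasDerivAt N N' t) (hB : HasDerivAt B B' t) :
    HasDerivAt (fun t => S t ^ 2 + N t ^ 2 - 1 / 4 * B t ^ 2)
      (2 * (S t * S' + N t * N') - B t * B' / 2) t := by
  refine (((hS.pow 2).add (hN.pow 2)).sub ((hB.pow 2).const_mul (1 / 4))).congr_deriv ?_
  ring

theorem stmt5_general (f c₀ : ℝ) (Bb BbS BbN GbS GbN Ω : ℝ → ℝ)
    (hBb : ∀ t, HasDerivAt Bb (-(4 * (BbN t * GbN t + BbS t * GbS t) / (Ω t) ^ 2)) t)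
    (hBbS : ∀ t, HasDerivAt BbS (-(f * BbN t + (Bb t * GbS t - 2 * c₀ * BbN t) / (Ω t) ^ 2)) t)
    (hBbN : ∀ t, HasDerivAt BbN (-(-(f * BbS t) + (Bb t * GbN t + 2 * c₀ * BbS t) / (Ω t) ^ 2)) t) :
    ∃ c : ℝ, ∀ t, (BbS t) ^ 2 + (BbN t) ^ 2 - (1 / 4) * (Bb t) ^ 2 = c := by
  -- The `f`- and `c₀`-terms cancel in pairs and the `GbS`, `GbN` couplings cancel against `Bb`;
  -- this is a ring identity with `(Ω t)⁻¹` as an indeterminate.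
  have hderiv : ∀ t, HasDerivAt (fun t => BbS t ^ 2 + BbN t ^ 2 - 1 / 4 * Bb t ^ 2) 0 t := fun t =>
    ((hBbS t).sq_add_sq_sub_quarter_sq (hBbN t) (hBb t)).congr_deriv (by ring)
  exact ⟨_, fun t => is_const_of_deriv_eq_zero (fun x => (hderiv x).differentiableAt)
    (fun x => (hderiv x).deriv) t 0⟩

/-- the integral of motion (5.3.14): B̄_S² + B̄_N² - (1/4)B̄² is constant. -/
theorem stmt5 (f c₀ : ℝ) (Bb BbS BbN GbS GbN Ω : ℝ → ℝ) (hΩpos : ∀ t, 0 < Ω t)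
    (hBb : ∀ t, HasDerivAt Bb (-(4 * (BbN t * GbN t + BbS t * GbS t) / (Ω t) ^ 2)) t)
    (hBbS : ∀ t, HasDerivAt BbS (-(f * BbN t + (Bb t * GbS t - 2 * c₀ * BbN t) / (Ω t) ^ 2)) t)
    (hBbN : ∀ t, HasDerivAt BbN (-(-(f * BbS t) + (Bb t * GbN t + 2 * c₀ * BbS t) / (Ω t) ^ 2)) t) :
    ∃ c : ℝ, ∀ t, (BbS t) ^ 2 + (BbN t) ^ 2 - (1 / 4) * (Bb t) ^ 2 = c :=
  stmt5_general f c₀ Bb BbS BbN GbS GbN Ω hBb hBbS hBbN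
end

section
/- Suppose B̄, B̄_S, B̄_N, Ḡ_S, Ḡ_N : ℝ → ℝ satisfy: B̄' + 4(B̄_N Ḡ_N + B̄_S Ḡ_S)/Ω² = 0; Ḡ_S' + f Ḡ_N + 2α B̄_S/Ω² = 0; Ḡ_N' - f Ḡ_S + 2α B̄_N/Ω² = 0, where Ω : ℝ → ℝ is positive and ε₂ has been chosen so that (2ε₂ m/(m-1))/Ω^{2(m-1)} = 2α/Ω² with α a constant. Then Ḡ_S² + Ḡ_N² - α B̄ is constant. -/
/-! Differentiating `Ḡ_S² + Ḡ_N² - α B̄`, the `f`-terms cancel because they rotate `(Ḡ_S, Ḡ_N)`,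
and the `2α B̄/Ω²` forcing terms cancel against `α B̄'`. -/

theorem hasDerivAt_sq_add_sq_sub_mul_eq_zero {f α ω t : ℝ} {Bb BbS BbN GbS GbN : ℝ → ℝ}
    (hBb : HasDerivAt Bb (-(4 * (BbN t * GbN t + BbS t * GbS t) / ω ^ 2)) t)
    (hGbS : HasDerivAt GbS (-(f * GbN t + 2 * α * BbS t / ω ^ 2)) t)
    (hGbN : HasDerivAt GbN (-(-(f * GbS t) + 2 * α * BbN t / ω ^ 2)) t) :
    HasDerivAt (fun s => GbS s ^ 2 + GbN s ^ 2 - α * Bb s) 0 t := by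
  refine (((hGbS.fun_pow 2).add (hGbN.fun_pow 2)).sub (hBb.const_mul α)).congr_deriv ?_
  ring

theorem exists_const_of_hasDerivAt_zero {F : ℝ → ℝ} (hF : ∀ t, HasDerivAt F 0 t) :
    ∃ c : ℝ, ∀ t, F t = c :=
  ⟨F 0, fun t => is_const_of_deriv_eq_zero (fun x => (hF x).differentiableAt)
    (fun x => (hF x).deriv) t 0⟩

theorem stmt6_general (f α : ℝ) (Bb BbS BbN GbS GbN Ω : ℝ → ℝ)
    (hBb : ∀ t, HasDerivAt Bb (-(4 * (BbN t * GbN t + BbS t * GbS t) / (Ω t) ^ 2)) t)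
    (hGbS : ∀ t, HasDerivAt GbS (-(f * GbN t + 2 * α * BbS t / (Ω t) ^ 2)) t)
    (hGbN : ∀ t, HasDerivAt GbN (-(-(f * GbS t) + 2 * α * BbN t / (Ω t) ^ 2)) t) :
    ∃ c : ℝ, ∀ t, (GbS t) ^ 2 + (GbN t) ^ 2 - α * Bb t = c :=
  exists_const_of_hasDerivAt_zero fun t =>
    hasDerivAt_sq_add_sq_sub_mul_eq_zero (hBb t) (hGbS t) (hGbN t)

/-- the integral of motion (5.3.15): Ḡ_S² + Ḡ_N² - α·B̄ is constant. -/
theorem stmt6 (f α : ℝ) (Bb BbS BbN GbS GbN Ω : ℝ → ℝ) (hΩpos : ∀ t, 0 < Ω t)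
    (hBb : ∀ t, HasDerivAt Bb (-(4 * (BbN t * GbN t + BbS t * GbS t) / (Ω t) ^ 2)) t)
    (hGbS : ∀ t, HasDerivAt GbS (-(f * GbN t + 2 * α * BbS t / (Ω t) ^ 2)) t)
    (hGbN : ∀ t, HasDerivAt GbN (-(-(f * GbS t) + 2 * α * BbN t / (Ω t) ^ 2)) t) :
    ∃ c : ℝ, ∀ t, (GbS t) ^ 2 + (GbN t) ^ 2 - α * Bb t = c :=
  stmt6_general f α Bb BbS BbN GbS GbN Ω hBb hGbS hGbN
end

section
/- Suppose B̄, B̄_S, B̄_N, Ḡ_S, Ḡ_N : ℝ → ℝ satisfy: B̄' + 4(B̄_N Ḡ_N + B̄_S Ḡ_S)/Ω² = 0; B̄_S' + f B̄_N + (B̄ Ḡ_S - 2c₀ B̄_N)/Ω² = 0; B̄_N' - f B̄_S + (B̄ Ḡ_N + 2c₀ B̄_S)/Ω² = 0; Ḡ_S' + f Ḡ_N + 2α B̄_S/Ω² = 0; Ḡ_N' - f Ḡ_S + 2α B̄_N/Ω² = 0, where Ω : ℝ → ℝ is positive. Then 2(B̄_N Ḡ_S - B̄_S Ḡ_N) -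 c₀ B̄ is constant. -/
/-!
Differentiating `2 (B̄_N Ḡ_S - B̄_S Ḡ_N) - c₀ B̄` along the system, the rotation terms in `f` and the
`α`-terms cancel in pairs, and what remains of the first part is `-4 c₀ (B̄_N Ḡ_N + B̄_S Ḡ_S) / Ω²`,
which is exactly cancelled by `-c₀ B̄'`.
-/

theorem exists_eq_const_of_hasDerivAt_zero {𝕜 G : Type*} [RCLike 𝕜] [NormedAddCommGroup G]
    [NormedSpace 𝕜 G] {g : 𝕜 → G} (hg : ∀ x, HasDerivAt g 0 x) : ∃ c, ∀ x, g x = c :=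
  ⟨g 0, fun x =>
    is_const_of_deriv_eq_zero (fun y => (hg y).differentiableAt) (fun y => (hg y).deriv) x 0⟩

theorem stmt7_general (f c₀ α : ℝ) (Bb BbS BbN GbS GbN Ω : ℝ → ℝ)
    (hBb : ∀ t, HasDerivAt Bb (-(4 * (BbN t * GbN t + BbS t * GbS t) / (Ω t) ^ 2)) t)
    (hBbS : ∀ t, HasDerivAt BbS (-(f * BbN t + (Bb t * GbS t - 2 * c₀ * BbN t) / (Ω t) ^ 2)) t)
    (hBbN : ∀ t, HasDerivAt BbN (-(-(f * BbS t) + (Bb t * GbN t + 2 * c₀ * BbS t) / (Ω t) ^ 2)) t)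
    (hGbS : ∀ t, HasDerivAt GbS (-(f * GbN t + 2 * α * BbS t / (Ω t) ^ 2)) t)
    (hGbN : ∀ t, HasDerivAt GbN (-(-(f * GbS t) + 2 * α * BbN t / (Ω t) ^ 2)) t) :
    ∃ c : ℝ, ∀ t, 2 * (BbN t * GbS t - BbS t * GbN t) - c₀ * Bb t = c := by
  refine exists_eq_const_of_hasDerivAt_zero fun t => ?_
  have hderiv := ((((hBbN t).mul (hGbS t)).sub ((hBbS t).mul (hGbN t))).const_mul 2).sub
    ((hBb t).const_mul c₀)
  refine hderiv.congr_deriv ?_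
  ring

/-- the angular-momentum-type integral (a56):
2(B̄_N Ḡ_S - B̄_S Ḡ_N) - c₀ B̄ is constant. -/
theorem stmt7 (f c₀ α : ℝ) (Bb BbS BbN GbS GbN Ω : ℝ → ℝ) (hΩpos : ∀ t, 0 < Ω t)
    (hBb : ∀ t, HasDerivAt Bb (-(4 * (BbN t * GbN t + BbS t * GbS t) / (Ω t) ^ 2)) t)
    (hBbS : ∀ t, HasDerivAt BbS (-(f * BbN t + (Bb t * GbS t - 2 * c₀ * BbN t) / (Ω t) ^ 2)) t)
    (hBbN : ∀ t, HasDerivAt BbN (-(-(f * BbS t) + (Bb t * GbN t + 2 * c₀ * BbS t) / (Ω t) ^ 2)) t)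
    (hGbS : ∀ t, HasDerivAt GbS (-(f * GbN t + 2 * α * BbS t / (Ω t) ^ 2)) t)
    (hGbN : ∀ t, HasDerivAt GbN (-(-(f * GbS t) + 2 * α * BbN t / (Ω t) ^ 2)) t) :
    ∃ c : ℝ, ∀ t, 2 * (BbN t * GbS t - BbS t * GbN t) - c₀ * Bb t = c :=
  stmt7_general f c₀ α Bb BbS BbN GbS GbN Ω hBb hBbS hBbN hGbS hGbN
end

section
/- Let δ ≠ 0 and suppose Ω : ℝ → ℝ is positive and differentiable and satisfies both δ²(Ω')² + (c₀² - c_III)δ²/Ω² + (c_IV² - 4c_II c_III)Ω² - αδ³/Ω⁴ + 2c₀c_IV - 4α c_II δ = 0 and (Ω')² + (f²/4)Ω² + (c₀² - c_III)/Ω² - αδ/Ω⁴ + k = 0 on a nontrivial interval, where Ω² is non-constant on that interval. Then c_IV² - 4c_II c_III = δ²f²/4 and k = (2c₀c_IV - 4α c_II δ)/δ². -/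
/-- compatibility of (5.4.15) with the first integral of the
Steen–Ermakov equation forces c_IV² - 4c_II c_III = δ²f²/4 and
k = (2c₀c_IV - 4α c_II δ)/δ². -/
theorem stmt9 (c₀ cII cIII cIV α f k δ a b : ℝ) (hδ : δ ≠ 0) (hab : a < b)
    (Ω Ω' : ℝ → ℝ) (hΩpos : ∀ t, 0 < Ω t)
    (hΩ : ∀ t ∈ Set.Ioo a b, HasDerivAt Ω (Ω' t) t)
    (hnonconst : ∃ t₁ ∈ Set.Ioo a b, ∃ t₂ ∈ Set.Ioo a b, (Ω t₁) ^ 2 ≠ (Ω t₂) ^ 2)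
    (h1 : ∀ t ∈ Set.Ioo a b, δ ^ 2 * (Ω' t) ^ 2 + (c₀ ^ 2 - cIII) * δ ^ 2 / (Ω t) ^ 2
      + (cIV ^ 2 - 4 * cII * cIII) * (Ω t) ^ 2 - α * δ ^ 3 / (Ω t) ^ 4
      + 2 * c₀ * cIV - 4 * α * cII * δ = 0)
    (h2 : ∀ t ∈ Set.Ioo a b, (Ω' t) ^ 2 + (f ^ 2 / 4) * (Ω t) ^ 2
      + (c₀ ^ 2 - cIII) / (Ω t) ^ 2 - α * δ / (Ω t) ^ 4 + k = 0) :
    cIV ^ 2 - 4 * cII * cIII = δ ^ 2 * f ^ 2 / 4 ∧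
      k = (2 * c₀ * cIV - 4 * α * cII * δ) / δ ^ 2 := by
  obtain ⟨t₁, ht₁, t₂, ht₂, hne⟩ := hnonconst
  have key : ∀ t ∈ Set.Ioo a b,
      (cIV ^ 2 - 4 * cII * cIII - δ ^ 2 * f ^ 2 / 4) * (Ω t) ^ 2
        + (2 * c₀ * cIV - 4 * α * cII * δ - δ ^ 2 * k) = 0 := by
    intro t ht
    have hΩne : Ω t ≠ 0 := (hΩpos t).ne'
    have e1 := h1 t ht
    have e2 := h2 t ht
    linear_combination e1 - δ ^ 2 * e2
  have k1 := key t₁ ht₁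
  have k2 := key t₂ ht₂
  have hA0 : cIV ^ 2 - 4 * cII * cIII - δ ^ 2 * f ^ 2 / 4 = 0 := by
    have h : (cIV ^ 2 - 4 * cII * cIII - δ ^ 2 * f ^ 2 / 4) * ((Ω t₁) ^ 2 - (Ω t₂) ^ 2) = 0 := by
      linarith
    rcases mul_eq_zero.mp h with h | h
    · exact h
    · exact absurd (sub_eq_zero.mp h) hne
  constructor
  · linarith
  · have hB0 : 2 * c₀ * cIV - 4 * α * cII * δ - δ ^ 2 * k = 0 := by
      rw [hA0] at k1; linarith
    field_simp
    linarith
end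

section
/- Let α, β : ℝ → ℝ be positive and twice differentiable, satisfying the Ermakov–Ray–Reid system α'' = c₁*/(α²β) and β'' = c₂*/(αβ²) for constants c₁*, c₂*. Then the quantity I = (1/2)(α'β - αβ')² + c₁*·(β/α) + c₂*·(α/β) is constant. -/
/-- the Ray–Reid invariant of the system (5.7.8) is constant. -/
theorem stmt10 (c₁ c₂ : ℝ) (α β α' β' : ℝ → ℝ)
    (hαpos : ∀ t, 0 < α t) (hβpos : ∀ t, 0 < β t)
    (hα : ∀ t, HasDerivAt α (α' t) t) (hβ : ∀ t, HasDerivAt β (β' t) t)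
    (hα' : ∀ t, HasDerivAt α' (c₁ / ((α t) ^ 2 * β t)) t)
    (hβ' : ∀ t, HasDerivAt β' (c₂ / (α t * (β t) ^ 2)) t) :
    ∃ I : ℝ, ∀ t, (1 / 2) * (α' t * β t - α t * β' t) ^ 2
      + c₁ * (β t / α t) + c₂ * (α t / β t) = I := by
  set F : ℝ → ℝ := fun t => (1 / 2) * (α' t * β t - α t * β' t) ^ 2
      + c₁ * (β t / α t) + c₂ * (α t / β t) with hF
  have hderiv : ∀ t, HasDerivAt F 0 t := by
    intro t
    have ha := (hαpos t).ne'
    have hb := (hβpos t).ne'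
    have h1 : HasDerivAt (fun t => α' t * β t - α t * β' t)
        ((c₁ / ((α t) ^ 2 * β t)) * β t + α' t * β' t
          - (α' t * β' t + α t * (c₂ / (α t * (β t) ^ 2)))) t :=
      ((hα' t).mul (hβ t)).sub ((hα t).mul (hβ' t))
    have h2 : HasDerivAt F
        ((1 / 2) * (2 * (α' t * β t - α t * β' t) ^ 1 *
          ((c₁ / ((α t) ^ 2 * β t)) * β t + α' t * β' t
            - (α' t * β' t + α t * (c₂ / (α t * (β t) ^ 2)))))
        + c₁ * ((β' t * α t - β t * α' t) / (α t) ^ 2)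
        + c₂ * ((α' t * β t - α t * β' t) / (β t) ^ 2)) t := by
      exact (((h1.pow 2).const_mul _).add
        (((hβ t).div (hα t) ha).const_mul c₁)).add
        (((hα t).div (hβ t) hb).const_mul c₂)
    convert h2 using 1
    field_simp
    ring
  exact ⟨F 0, fun t => is_const_of_deriv_eq_zero
    (fun x => (hderiv x).differentiableAt)
    (fun x => (hderiv x).deriv) t 0⟩
end

section
/- Let Φ, Ψ : ℝ → ℝ be positive twice differentiable functions satisfying the Ermakov–Ray–Reid system Φ'' + ω(t)²Φ = F(Ψ/Φ)/(Φ²Ψ) and Ψ'' + ω(t)²Ψ = G(Φ/Ψ)/(ΦΨ²), where F, G : ℝ → ℝ are continuous. Then I = (1/2)(ΦΨ' - ΨΦ')² + ∫^{Ψ/Φ} F(z) dz + ∫^{Φ/Ψ} G(w) dw is constant in time (i.e. its derivative vanishes: (ΦΨ' - ΨΦ')·(ΦΨ'' - ΨΦ'') + F(Ψ/Φ)·(Ψ/Φ)' + G(Φ/Ψ)·(Φ/Ψ)' = 0 implies I' = 0 where the integrals denote fixed antiderivatives of F and G). -/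
/-!
Write `W = Φ Ψ' - Ψ Φ'` for the Wronskian. Along solutions the `ω²` terms cancel in
`W' = Φ Ψ'' - Ψ Φ''`, leaving `W' = G(Φ/Ψ)/Ψ² - F(Ψ/Φ)/Φ²`, while `(Ψ/Φ)' = W/Φ²` and
`(Φ/Ψ)' = -W/Ψ²`. Hence the derivative of `W²/2 + IF(Ψ/Φ) + IG(Φ/Ψ)` is
`W (G/Ψ² - F/Φ²) + F W/Φ² - G W/Ψ² = 0`.
-/

section Wronskian

variable {𝕜 : Type*} [NontriviallyNormedField 𝕜] {f g f' g' : 𝕜 → 𝕜} {f'' g'' : 𝕜} {t : 𝕜}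

theorem HasDerivAt.wronskian (hf : HasDerivAt f (f' t) t) (hg : HasDerivAt g (g' t) t)
    (hf' : HasDerivAt f' f'' t) (hg' : HasDerivAt g' g'' t) :
    HasDerivAt (fun s => f s * g' s - g s * f' s) (f t * g'' - g t * f'') t :=
  ((hf.mul hg').sub (hg.mul hf')).congr_deriv (by ring)

theorem HasDerivAt.div_eq_wronskian_div (hf : HasDerivAt f (f' t) t)
    (hg : HasDerivAt g (g' t) t) (hf0 : f t ≠ 0) :
    HasDerivAt (fun s => g s / f s) ((f t * g' t - g t * f' t) / f t ^ 2) t :=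
  (hg.div hf hf0).congr_deriv (by ring)

end Wronskian

theorem exists_forall_eq_of_hasDerivAt_zero {f : ℝ → ℝ} (hf : ∀ t, HasDerivAt f 0 t) :
    ∃ c, ∀ t, f t = c :=
  ⟨f 0, fun t => is_const_of_deriv_eq_zero (fun s => (hf s).differentiableAt)
    (fun s => (hf s).deriv) t 0⟩

theorem hasDerivAt_rayReid_invariant {ω F G IF IG Φ Ψ Φ' Ψ' : ℝ → ℝ} {t : ℝ}
    (hIF : HasDerivAt IF (F (Ψ t / Φ t)) (Ψ t / Φ t))
    (hIG : HasDerivAt IG (G (Φ t / Ψ t)) (Φ t / Ψ t))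
    (hΦ0 : Φ t ≠ 0) (hΨ0 : Ψ t ≠ 0)
    (hΦ : HasDerivAt Φ (Φ' t) t) (hΨ : HasDerivAt Ψ (Ψ' t) t)
    (hΦ' : HasDerivAt Φ' (-(ω t) ^ 2 * Φ t + F (Ψ t / Φ t) / ((Φ t) ^ 2 * Ψ t)) t)
    (hΨ' : HasDerivAt Ψ' (-(ω t) ^ 2 * Ψ t + G (Φ t / Ψ t) / (Φ t * (Ψ t) ^ 2)) t) :
    HasDerivAt (fun s => (1 / 2) * (Φ s * Ψ' s - Ψ s * Φ' s) ^ 2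
      + IF (Ψ s / Φ s) + IG (Φ s / Ψ s)) 0 t := by
  have hW : HasDerivAt (fun s => Φ s * Ψ' s - Ψ s * Φ' s)
      (G (Φ t / Ψ t) / Ψ t ^ 2 - F (Ψ t / Φ t) / Φ t ^ 2) t :=
    (hΦ.wronskian hΨ hΦ' hΨ').congr_deriv (by field_simp; ring)
  have hIFc := hIF.comp t (hΦ.div_eq_wronskian_div hΨ hΦ0)
  have hIGc := hIG.comp t (hΨ.div_eq_wronskian_div hΦ hΨ0)
  refine (((hW.pow 2).const_mul (1 / 2 : ℝ)).add hIFc |>.add hIGc).congr_deriv ?_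
  field_simp
  ring

theorem stmt12_general (ω : ℝ → ℝ) (F G IF IG : ℝ → ℝ)
    (hIF : ∀ z, HasDerivAt IF (F z) z) (hIG : ∀ w, HasDerivAt IG (G w) w)
    (Φ Ψ Φ' Ψ' : ℝ → ℝ) (hΦpos : ∀ t, 0 < Φ t) (hΨpos : ∀ t, 0 < Ψ t)
    (hΦ : ∀ t, HasDerivAt Φ (Φ' t) t) (hΨ : ∀ t, HasDerivAt Ψ (Ψ' t) t)
    (hΦ' : ∀ t, HasDerivAt Φ'
      (-(ω t) ^ 2 * Φ t + F (Ψ t / Φ t) / ((Φ t) ^ 2 * Ψ t)) t)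
    (hΨ' : ∀ t, HasDerivAt Ψ'
      (-(ω t) ^ 2 * Ψ t + G (Φ t / Ψ t) / (Φ t * (Ψ t) ^ 2)) t) :
    ∃ I : ℝ, ∀ t, (1 / 2) * (Φ t * Ψ' t - Ψ t * Φ' t) ^ 2
      + IF (Ψ t / Φ t) + IG (Φ t / Ψ t) = I :=
  exists_forall_eq_of_hasDerivAt_zero fun t =>
    hasDerivAt_rayReid_invariant (hIF _) (hIG _) (hΦpos t).ne' (hΨpos t).ne'
      (hΦ t) (hΨ t) (hΦ' t) (hΨ' t)

/-- the general Ray–Reid invariant of a 2-component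
Ermakov–Ray–Reid system is constant. -/
theorem stmt12 (ω : ℝ → ℝ) (hω : Continuous ω) (F G IF IG : ℝ → ℝ)
    (hF : Continuous F) (hG : Continuous G)
    (hIF : ∀ z, HasDerivAt IF (F z) z) (hIG : ∀ w, HasDerivAt IG (G w) w)
    (Φ Ψ Φ' Ψ' : ℝ → ℝ) (hΦpos : ∀ t, 0 < Φ t) (hΨpos : ∀ t, 0 < Ψ t)
    (hΦ : ∀ t, HasDerivAt Φ (Φ' t) t) (hΨ : ∀ t, HasDerivAt Ψ (Ψ' t) t)
    (hΦ' : ∀ t, HasDerivAt Φ'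
      (-(ω t) ^ 2 * Φ t + F (Ψ t / Φ t) / ((Φ t) ^ 2 * Ψ t)) t)
    (hΨ' : ∀ t, HasDerivAt Ψ'
      (-(ω t) ^ 2 * Ψ t + G (Φ t / Ψ t) / (Φ t * (Ψ t) ^ 2)) t) :
    ∃ I : ℝ, ∀ t, (1 / 2) * (Φ t * Ψ' t - Ψ t * Φ' t) ^ 2
      + IF (Ψ t / Φ t) + IG (Φ t / Ψ t) = I :=
  stmt12_general ω F G IF IG hIF hIG Φ Ψ Φ' Ψ' hΦpos hΨpos hΦ hΨ hΦ' hΨ'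
end

section
/- Let L̄*, Q̄ : ℝ → Matrix (Fin 2) (Fin 2) ℝ be differentiable and satisfy Q̄' + [Q̄, L̄*] = 0 and L̄*' + [Q̄, P] = 0, where P = !![0, -1; 1, 0]. Define 𝓛(λ) = L̄* + λP and 𝓜(λ) = Q̄ + λL̄* + λ²P. Then for every λ ∈ ℝ, 𝓜(λ)' + [𝓜(λ), 𝓛(λ)] = 0. -/
/-- the system (5.6.24) is equivalent to the isospectral Lax
equation 𝓜(λ)' + [𝓜(λ), 𝓛(λ)] = 0 with spectral parameter λ. -/
theorem stmt13 (Lstar Q Lstar' Q' : ℝ → Matrix (Fin 2) (Fin 2) ℝ)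
    (P : Matrix (Fin 2) (Fin 2) ℝ) (hP : P = !![0, -1; 1, 0])
    (hQd : ∀ i j t, HasDerivAt (fun s => Q s i j) (Q' t i j) t)
    (hLd : ∀ i j t, HasDerivAt (fun s => Lstar s i j) (Lstar' t i j) t)
    (hQ : ∀ t, Q' t + (Q t * Lstar t - Lstar t * Q t) = 0)
    (hL : ∀ t, Lstar' t + (Q t * P - P * Q t) = 0)
    (𝓛 𝓜 : ℝ → ℝ → Matrix (Fin 2) (Fin 2) ℝ)
    (h𝓛 : ∀ lam t, 𝓛 lam t = Lstar t + lam • P)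
    (h𝓜 : ∀ lam t, 𝓜 lam t = Q t + lam • Lstar t + lam ^ 2 • P) :
    ∀ lam t,
      (∀ i j, HasDerivAt (fun s => 𝓜 lam s i j) ((Q' t + lam • Lstar' t) i j) t) ∧
      (Q' t + lam • Lstar' t) + (𝓜 lam t * 𝓛 lam t - 𝓛 lam t * 𝓜 lam t) = 0 := by
  intro lam t
  constructor
  · intro i j
    have hder : HasDerivAt (fun s => Q s i j + lam * Lstar s i j + lam ^ 2 * P i j)
        (Q' t i j + lam * Lstar' t i j + 0) t :=
      (((hQd i j t).add ((hLd i j t).const_mul lam)).add (hasDerivAt_const t _))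
    simp only [Matrix.add_apply, Matrix.smul_apply, smul_eq_mul, add_zero] at hder ⊢
    convert hder using 2 with s
    simp [h𝓜, Matrix.add_apply, Matrix.smul_apply, smul_eq_mul]
  · have key : 𝓜 lam t * 𝓛 lam t - 𝓛 lam t * 𝓜 lam t
        = (Q t * Lstar t - Lstar t * Q t) + lam • (Q t * P - P * Q t) := by
      rw [h𝓛, h𝓜]
      simp only [add_mul, mul_add, smul_mul_assoc, mul_smul_comm, smul_smul, smul_add, smul_sub]
      ring_nf
      abel
    rw [key]
    have := hQ t
    have := hL t
    have : (Q' t + lam • Lstar' t) + ((Q t * Lstar t - Lstar t * Q t) + lam • (Q t * P - P * Q t))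
        = (Q' t + (Q t * Lstar t - Lstar t * Q t)) + lam • (Lstar' t + (Q t * P - P * Q t)) := by
      rw [smul_add]; abel
    rw [this, hQ t, hL t]
    simp
end

section
/- Let L, E : ℝ → Matrix (Fin 2) (Fin 2) ℝ be differentiable and satisfy E' + EL + LᵀE + (m-1)(tr L)E = 0 and L' + L² + f·P·L + c(t)·E = 0, where P = !![0,-1;1,0] and f ∈ ℝ. Define D(t) = exp((f t/2)·P), L̃ = D L D⁻¹ + (f/2)P, Ẽ = D E D⁻¹. Then Ẽ' + Ẽ L̃ + L̃ᵀ Ẽ + (m-1)(tr L̃)Ẽ = 0 and L̃' + L̃² + (f²/4)·I + c(t)·Ẽ = 0, provided E is symmetric. -/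
/-!
With `A = (f/2) P`, the gauge is `D t = exp (t A)`, and conjugation by it is an algebra
automorphism fixing `A` and `P`, with `d/dt (D X D⁻¹) = [A, D X D⁻¹] + D X' D⁻¹`. Write
`M = D L D⁻¹`, so that `L̃ = M + A`. In the `L`-equation the Coriolis term becomes
`f P M = 2 A M`, which together with the commutator `[A, M]` gives `-(A M + M A)`: this completes
`M²` to `L̃² - A²`, and `A² = -(f²/4) I` because `P² = -I`. Since `A` is skew, `D` is orthogonal,
so conjugation commutes with transposition and preserves the trace; in the `E`-equation the
commutator `[A, Ẽ]` is then absorbed by the shift from `M` to `L̃`, as `L̃ᵀ = Mᵀ - A` and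
`tr L̃ = tr L`.
-/

open Matrix NormedSpace

theorem Matrix.hasDerivAt_iff_forall_entry {m n : Type*} [Fintype m] [Fintype n]
    {F : ℝ → Matrix m n ℝ} {F' : Matrix m n ℝ} {t : ℝ} :
    HasDerivAt F F' t ↔ ∀ i j, HasDerivAt (fun s => F s i j) (F' i j) t :=
  hasDerivAt_pi.trans (forall_congr' fun _ => hasDerivAt_pi)

section ExpSmulConj

variable {𝔸 : Type*} [NormedRing 𝔸] [NormedAlgebra ℚ 𝔸] [CompleteSpace 𝔸]

theorem exp_mul_exp_neg (x : 𝔸) : exp x * exp (-x) = 1 := by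
  rw [← exp_add_of_commute (Commute.refl x).neg_right, add_neg_cancel, exp_zero]

theorem exp_neg_mul_exp (x : 𝔸) : exp (-x) * exp x = 1 := by
  rw [← exp_add_of_commute (Commute.refl x).neg_left, neg_add_cancel, exp_zero]

variable [NormedAlgebra ℝ 𝔸]

noncomputable def expSmulConj (A : 𝔸) (s : ℝ) : 𝔸 →ₐ[ℝ] 𝔸 where
  toFun X := exp (s • A) * X * exp (-(s • A))
  map_one' := by rw [mul_one, exp_mul_exp_neg]
  map_mul' X Y := by
    simp only [mul_assoc, ← mul_assoc (exp (-(s • A))) (exp (s • A)), exp_neg_mul_exp, one_mul]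
  map_zero' := by simp
  map_add' X Y := by simp [mul_add, add_mul]
  commutes' r := by simp [Algebra.algebraMap_eq_smul_one, exp_mul_exp_neg]

theorem expSmulConj_apply (A : 𝔸) (s : ℝ) (X : 𝔸) :
    expSmulConj A s X = exp (s • A) * X * exp (-(s • A)) := rfl

theorem expSmulConj_of_commute {A X : 𝔸} (h : Commute A X) (s : ℝ) :
    expSmulConj A s X = X := by
  rw [expSmulConj_apply, (h.smul_left s).exp_left.eq, mul_assoc, exp_mul_exp_neg, mul_one]

theorem hasDerivAt_expSmulConj (A : 𝔸) {X : ℝ → 𝔸} {X' : 𝔸} {t : ℝ}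
    (hX : HasDerivAt X X' t) :
    HasDerivAt (fun s => expSmulConj A s (X s))
      (A * expSmulConj A t (X t) - expSmulConj A t (X t) * A + expSmulConj A t X') t := by
  have hinv : HasDerivAt (fun s : ℝ => exp (-(s • A))) (exp (-(t • A)) * -A) t := by
    simpa only [smul_neg] using hasDerivAt_exp_smul_const (-A) t
  refine (((hasDerivAt_exp_smul_const' A t).fun_mul hX).fun_mul hinv).congr_deriv ?_
  simp only [expSmulConj_apply]
  noncomm_ring

theorem hasDerivAt_expSmulConj_riccati {P : 𝔸} (hP : P * P = -1) (f c : ℝ) {L E : ℝ → 𝔸}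
    {t : ℝ} (hL : HasDerivAt L (-(L t * L t + f • (P * L t) + c • E t)) t) :
    HasDerivAt (fun s => expSmulConj ((f / 2) • P) s (L s) + (f / 2) • P)
      (-((expSmulConj ((f / 2) • P) t (L t) + (f / 2) • P) *
          (expSmulConj ((f / 2) • P) t (L t) + (f / 2) • P) + (f ^ 2 / 4) • (1 : 𝔸) +
        c • expSmulConj ((f / 2) • P) t (E t))) t := by
  refine ((hasDerivAt_expSmulConj _ hL).add_const _).congr_deriv ?_
  simp only [map_neg, map_add, map_mul, map_smul,
    expSmulConj_of_commute ((Commute.refl P).smul_left (f / 2))]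
  simp only [add_mul, mul_add, smul_mul_assoc, mul_smul_comm, hP]
  module

end ExpSmulConj

open scoped Matrix.Norms.Operator

section Matrix

variable {n : Type*} [Fintype n] [DecidableEq n]

/- The same as `expSmulConj_apply`, but with `exp` elaborated for the product topology on
matrices rather than the one of the operator norm; only in this form do lemmas such as
`Matrix.exp_transpose` and `Matrix.exp_neg` rewrite it. -/
theorem Matrix.expSmulConj_eq (A : Matrix n n ℝ) (s : ℝ) (X : Matrix n n ℝ) :
    expSmulConj A s X = exp (s • A) * X * exp (-(s • A)) := rfl

omit [DecidableEq n] in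
theorem Matrix.trace_eq_zero_of_transpose_eq_neg {A : Matrix n n ℝ} (hA : Aᵀ = -A) :
    trace A = 0 := by
  have h := trace_transpose A
  rw [hA, trace_neg] at h
  linarith

theorem Matrix.transpose_expSmulConj {A : Matrix n n ℝ} (hA : Aᵀ = -A) (s : ℝ)
    (X : Matrix n n ℝ) : (expSmulConj A s X)ᵀ = expSmulConj A s Xᵀ := by
  rw [expSmulConj_eq, expSmulConj_eq, transpose_mul, transpose_mul, ← exp_transpose,
    ← exp_transpose, transpose_neg, transpose_smul, hA, smul_neg, neg_neg, mul_assoc]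

theorem Matrix.trace_expSmulConj (A : Matrix n n ℝ) (s : ℝ) (X : Matrix n n ℝ) :
    trace (expSmulConj A s X) = trace X := by
  rw [expSmulConj_apply, trace_mul_cycle, exp_neg_mul_exp, one_mul]

theorem hasDerivAt_expSmulConj_lyapunov {A : Matrix n n ℝ} (hA : Aᵀ = -A) (κ : ℝ)
    {E L : ℝ → Matrix n n ℝ} {t : ℝ}
    (hE : HasDerivAt E (-(E t * L t + (L t)ᵀ * E t + (κ * trace (L t)) • E t)) t) :
    HasDerivAt (fun s => expSmulConj A s (E s))
      (-(expSmulConj A t (E t) * (expSmulConj A t (L t) + A) +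
        (expSmulConj A t (L t) + A)ᵀ * expSmulConj A t (E t) +
        (κ * trace (expSmulConj A t (L t) + A)) • expSmulConj A t (E t))) t := by
  refine (hasDerivAt_expSmulConj A hE).congr_deriv ?_
  rw [transpose_add, hA, transpose_expSmulConj hA, trace_add, trace_expSmulConj,
    trace_eq_zero_of_transpose_eq_neg hA, add_zero]
  simp only [map_neg, map_add, map_mul, map_smul]
  simp only [add_mul, mul_add, neg_mul]
  abel

end Matrix

theorem stmt15_general (m f : ℝ) (c : ℝ → ℝ)
    (P : Matrix (Fin 2) (Fin 2) ℝ) (hP : P = !![0, -1; 1, 0])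
    (L E : ℝ → Matrix (Fin 2) (Fin 2) ℝ)
    (hE : ∀ t i j, HasDerivAt (fun s => E s i j)
      ((-(E t * L t + (L t)ᵀ * E t + ((m - 1) * Matrix.trace (L t)) • E t)) i j) t)
    (hL : ∀ t i j, HasDerivAt (fun s => L s i j)
      ((-(L t * L t + f • (P * L t) + c t • E t)) i j) t)
    (D Ltil Etil : ℝ → Matrix (Fin 2) (Fin 2) ℝ)
    (hD : ∀ t, D t = NormedSpace.exp ((f * t / 2) • P))
    (hLtil : ∀ t, Ltil t = D t * L t * (D t)⁻¹ + (f / 2) • P)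
    (hEtil : ∀ t, Etil t = D t * E t * (D t)⁻¹) :
    (∀ t i j, HasDerivAt (fun s => Etil s i j)
      ((-(Etil t * Ltil t + (Ltil t)ᵀ * Etil t
        + ((m - 1) * Matrix.trace (Ltil t)) • Etil t)) i j) t) ∧
    (∀ t i j, HasDerivAt (fun s => Ltil s i j)
      ((-(Ltil t * Ltil t + (f ^ 2 / 4) • (1 : Matrix (Fin 2) (Fin 2) ℝ)
        + c t • Etil t)) i j) t) := by
  have hPP : P * P = -1 := by
    subst hP
    ext i j
    fin_cases i <;> fin_cases j <;> simp [mul_apply]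
  have hPt : ((f / 2) • P)ᵀ = -((f / 2) • P) := by
    subst hP
    ext i j
    fin_cases i <;> fin_cases j <;> simp
  have hconj (t : ℝ) (X : Matrix (Fin 2) (Fin 2) ℝ) :
      D t * X * (D t)⁻¹ = expSmulConj ((f / 2) • P) t X := by
    rw [hD, ← Matrix.exp_neg, expSmulConj_eq, smul_smul, show t * (f / 2) = f * t / 2 by ring]
  obtain rfl : Etil = fun s => expSmulConj ((f / 2) • P) s (E s) :=
    funext fun s => (hEtil s).trans (hconj s _)
  obtain rfl : Ltil = fun s => expSmulConj ((f / 2) • P) s (L s) + (f / 2) • P :=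
    funext fun s => by rw [hLtil, hconj]
  simp only [← Matrix.hasDerivAt_iff_forall_entry] at hE hL ⊢
  exact ⟨fun t => hasDerivAt_expSmulConj_lyapunov hPt (m - 1) (hE t),
    fun t => hasDerivAt_expSmulConj_riccati hPP f (c t) (hL t)⟩

/-- the gauge transformation D(t) = exp((ft/2)P),
L̃ = D L D⁻¹ + (f/2)P, Ẽ = D E D⁻¹ removes the Coriolis term, yielding
(5.6.8)–(5.6.9). -/
theorem stmt15 (m f : ℝ) (c : ℝ → ℝ) (hc : Continuous c)
    (P : Matrix (Fin 2) (Fin 2) ℝ) (hP : P = !![0, -1; 1, 0])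
    (L E : ℝ → Matrix (Fin 2) (Fin 2) ℝ)
    (hEsymm : ∀ t, (E t)ᵀ = E t)
    (hE : ∀ t i j, HasDerivAt (fun s => E s i j)
      ((-(E t * L t + (L t)ᵀ * E t + ((m - 1) * Matrix.trace (L t)) • E t)) i j) t)
    (hL : ∀ t i j, HasDerivAt (fun s => L s i j)
      ((-(L t * L t + f • (P * L t) + c t • E t)) i j) t)
    (D Ltil Etil : ℝ → Matrix (Fin 2) (Fin 2) ℝ)
    (hD : ∀ t, D t = NormedSpace.exp ((f * t / 2) • P))
    (hLtil : ∀ t, Ltil t = D t * L t * (D t)⁻¹ + (f / 2) • P)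
    (hEtil : ∀ t, Etil t = D t * E t * (D t)⁻¹) :
    (∀ t i j, HasDerivAt (fun s => Etil s i j)
      ((-(Etil t * Ltil t + (Ltil t)ᵀ * Etil t
        + ((m - 1) * Matrix.trace (Ltil t)) • Etil t)) i j) t) ∧
    (∀ t i j, HasDerivAt (fun s => Ltil s i j)
      ((-(Ltil t * Ltil t + (f ^ 2 / 4) • (1 : Matrix (Fin 2) (Fin 2) ℝ)
        + c t • Etil t)) i j) t) :=
  stmt15_general m f c P hP L E hE hL D Ltil Etil hD hLtil hEtil
end
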